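/- Let M be a 3-array of perfect matchings of a cubic graph G with no triply covered edge. Then every component of the core of M is an even circuit which alternates doubly covered and uncovered edges. -/

import Mathlib

open SimpleGraph

variable {V : Type} [Fintype V] [DecidableEq V]

/-- A cubic graph: every vertex has exactly three neighbours. -/
def IsCubic (G : SimpleGraph V) : Prop := ∀ v : V, (G.neighborSet v).ncard = 3

/-- A proper 3-edge-colouring: adjacent (distinct, vertex-sharing) edges get distinct colours. -/
def ProperEdgeColoring (G : SimpleGraph V) (c : Sym2 V → Fin 3) : Prop :=
  ∀ e₁ ∈ G.edgeSet, ∀ e₂ ∈ G.edgeSet, e₁ ≠ e₂ → (∃ v : V, v ∈ e₁ ∧ v ∈ e₂) → c e₁ ≠ c e₂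

def ThreeEdgeColorable (G : SimpleGraph V) : Prop :=
  ∃ c : Sym2 V → Fin 3, ProperEdgeColoring G c

/-- 2-connectedness: at least 3 vertices, connected, and deleting any vertex leaves it connected. -/
def TwoConnected (G : SimpleGraph V) : Prop :=
  3 ≤ Fintype.card V ∧ G.Connected ∧
    ∀ v : V, ((⊤ : G.Subgraph).deleteVerts {v}).coe.Connected

/-- A snark: a 2-connected cubic graph with no proper 3-edge-colouring. -/
def IsSnark (G : SimpleGraph V) : Prop :=
  IsCubic G ∧ TwoConnected G ∧ ¬ ThreeEdgeColorable G

/-- The set of edges left uncovered by a 3-array of perfect matchings. -/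
def uncovered (G : SimpleGraph V) (M : Fin 3 → G.Subgraph) : Set (Sym2 V) :=
  {e | e ∈ G.edgeSet ∧ ∀ i, e ∉ (M i).edgeSet}

/-- The colouring defect: minimum number of uncovered edges over all 3-arrays. -/
noncomputable def defect (G : SimpleGraph V) : ℕ :=
  sInf {n : ℕ | ∃ M : Fin 3 → G.Subgraph,
    (∀ i, (M i).IsPerfectMatching) ∧ n = (uncovered G M).ncard}

/-- The number of matchings of the 3-array containing a given edge. -/
noncomputable def coverCount (G : SimpleGraph V) (M : Fin 3 → G.Subgraph)
    (e : Sym2 V) : ℕ :=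
  {i : Fin 3 | e ∈ (M i).edgeSet}.ncard

/-- The edge set of the core: edges of `G` not simply covered. -/
def coreEdges (G : SimpleGraph V) (M : Fin 3 → G.Subgraph) : Set (Sym2 V) :=
  {e | e ∈ G.edgeSet ∧ coverCount G M e ≠ 1}

/-- The core of a 3-array, as a graph on `V`. -/
def coreGraph (G : SimpleGraph V) (M : Fin 3 → G.Subgraph) : SimpleGraph V where
  Adj u w := G.Adj u w ∧ coverCount G M s(u, w) ≠ 1
  symm := by
    constructor
    intro u w h
    refine ⟨h.1.symm, ?_⟩
    rw [Sym2.eq_swap]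
    exact h.2
  loopless := by
    constructor
    intro v h
    exact (G.ne_of_adj h.1) rfl

/-!
At a vertex `v` the three perfect matchings pick three edges at `v`, so the cover counts of the
three edges at `v` sum to `3`. None of them is `3`, and if `v` lies on the core one of them is not
`1`; the only possibility is then the pattern `2, 1, 0`. Hence, within a component of the core,
the doubly covered edges pair off the vertices perfectly, and so do the uncovered edges: both
classes have half as many edges as the component has vertices, and together they make up all its
edges, an even number.
-/

set_option linter.unusedSectionVars false

section

open Finset

theorem Finset.card_filter_eq_two_eq_one_and_card_filter_eq_zero_eq_one {α : Type*}
    {s : Finset α} {f : α → ℕ} (hs : #s = 3) (hsum : ∑ x ∈ s, f x = 3)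
    (hle : ∀ x ∈ s, f x ≤ 2) (hne : ∃ x ∈ s, f x ≠ 1) :
    #{x ∈ s | f x = 2} = 1 ∧ #{x ∈ s | f x = 0} = 1 := by
  classical
  obtain ⟨a, b, c, hab, hac, hbc, rfl⟩ := card_eq_three.mp hs
  simp only [card_filter, sum_insert, mem_insert, mem_singleton, hab, hac, hbc,
    not_false_eq_true, sum_singleton, or_false, forall_eq_or_imp, forall_eq,
    exists_eq_or_imp, exists_eq_left] at hsum hle hne ⊢
  split_ifs <;> omega

theorem ncard_eq_two_mul_ncard_of_ncard_incident_eq_one {α : Type*} [Finite α]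
    {s : Set α} {t : Set (Sym2 α)} (ht : ∀ e ∈ t, ¬ e.IsDiag)
    (hts : ∀ e ∈ t, ∀ v ∈ e, v ∈ s)
    (hs : ∀ v ∈ s, {e ∈ t | v ∈ e}.ncard = 1) :
    s.ncard = 2 * t.ncard := by
  classical
  obtain ⟨s, rfl⟩ := s.toFinite.exists_finset_coe
  obtain ⟨t, rfl⟩ := t.toFinite.exists_finset_coe
  simp only [Set.ncard_coe_finset]
  rw [← mul_one #s, mul_comm 2]
  refine card_mul_eq_card_mul (fun v e => v ∈ e) (fun v hv => ?_) (fun e he => ?_)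
  · rw [← hs v hv, ← Set.ncard_coe_finset, coe_bipartiteAbove]
    rfl
  · rw [← Sym2.card_toFinset_of_not_isDiag e (ht e he)]
    congr 1
    ext v
    simp only [mem_bipartiteBelow, Sym2.mem_toFinset, and_iff_right_iff_imp]
    exact hts e he v

theorem SimpleGraph.Subgraph.IsPerfectMatching.card_filter_adj_neighborFinset {α : Type*}
    {G : SimpleGraph α} {M : G.Subgraph} [DecidableRel M.Adj] (hM : M.IsPerfectMatching)
    (v : α) [Fintype (G.neighborSet v)] : #{u ∈ G.neighborFinset v | M.Adj v u} = 1 := by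
  obtain ⟨w, hw, hw_unique⟩ := hM.1 (hM.2 v)
  refine card_eq_one.mpr ⟨w, ?_⟩
  ext u
  simp only [mem_filter, mem_neighborFinset, mem_singleton]
  exact ⟨fun h => hw_unique u h.2, fun h => h ▸ ⟨M.adj_sub hw, hw⟩⟩

variable {G : SimpleGraph V} {M : Fin 3 → G.Subgraph}

theorem coverCount_le_three (e : Sym2 V) : coverCount G M e ≤ 3 :=
  (Set.ncard_le_card _).trans_eq (Nat.card_eq_fintype_card.trans (Fintype.card_fin 3))

theorem sum_coverCount_neighborFinset [DecidableRel G.Adj] (hM : ∀ i, (M i).IsPerfectMatching)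
    (v : V) : ∑ u ∈ G.neighborFinset v, coverCount G M s(v, u) = 3 := by
  classical
  let r : V → Fin 3 → Prop := fun u i => (M i).Adj v u
  calc ∑ u ∈ G.neighborFinset v, coverCount G M s(v, u)
      = ∑ u ∈ G.neighborFinset v, #(univ.bipartiteAbove r u) := by
        refine sum_congr rfl fun u _ => ?_
        rw [← Set.ncard_coe_finset, coe_bipartiteAbove]
        simp only [coverCount, Subgraph.mem_edgeSet, mem_univ, true_and, r]
    _ = ∑ i, #((G.neighborFinset v).bipartiteBelow r i) :=
        sum_card_bipartiteAbove_eq_sum_card_bipartiteBelow r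
    _ = 3 := by
        simp only [bipartiteBelow, r, (hM _).card_filter_adj_neighborFinset, sum_const, card_univ,
          Fintype.card_fin, smul_eq_mul, mul_one]

theorem ncard_incident_coreEdges_eq_card [DecidableRel G.Adj] {c : ℕ} (hc : c ≠ 1) (v : V) :
    {e ∈ coreEdges G M | v ∈ e ∧ coverCount G M e = c}.ncard =
      #{u ∈ G.neighborFinset v | coverCount G M s(v, u) = c} := by
  rw [← Set.ncard_coe_finset, eq_comm,
    ← Set.ncard_image_of_injective _ fun _ _ => Sym2.congr_right.mp]
  refine congrArg Set.ncard (Set.ext fun e => ?_)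
  simp only [coreEdges, coe_filter, mem_neighborFinset, Set.mem_ofPred_eq, Set.mem_image]
  constructor
  · rintro ⟨u, ⟨hu, hcu⟩, rfl⟩
    exact ⟨⟨hu, hcu ▸ hc⟩, Sym2.mem_mk_left v u, hcu⟩
  · rintro ⟨⟨he, -⟩, hve, hce⟩
    obtain ⟨u, rfl⟩ := Sym2.mem_iff_exists.mp hve
    exact ⟨u, ⟨he, hce⟩, rfl⟩

theorem ncard_incident_doubly_covered_eq_one_and_ncard_incident_uncovered_eq_one
    (hG : IsCubic G) (hM : ∀ i, (M i).IsPerfectMatching)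
    (h3 : ∀ e ∈ G.edgeSet, coverCount G M e ≠ 3) {v : V}
    (hv : ∃ e ∈ coreEdges G M, v ∈ e) :
    {e ∈ coreEdges G M | v ∈ e ∧ coverCount G M e = 2}.ncard = 1 ∧
      {e ∈ coreEdges G M | v ∈ e ∧ coverCount G M e = 0}.ncard = 1 := by
  classical
  rw [ncard_incident_coreEdges_eq_card (by norm_num),
    ncard_incident_coreEdges_eq_card (by norm_num)]
  refine card_filter_eq_two_eq_one_and_card_filter_eq_zero_eq_one ?_
    (sum_coverCount_neighborFinset hM v) (fun u hu => ?_) ?_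
  · rw [← Set.ncard_coe_finset, coe_neighborFinset]
    exact hG v
  · have := h3 s(v, u) ((mem_neighborFinset _ _ _).mp hu)
    have := coverCount_le_three (M := M) s(v, u)
    omega
  · obtain ⟨e, ⟨he, hce⟩, hve⟩ := hv
    obtain ⟨u, rfl⟩ := Sym2.mem_iff_exists.mp hve
    exact ⟨u, (mem_neighborFinset _ _ _).mpr he, hce⟩

theorem connectedComponentMk_eq_of_mem_coreEdges {e : Sym2 V} (he : e ∈ coreEdges G M)
    {u w : V} (hu : u ∈ e) (hw : w ∈ e) :
    (coreGraph G M).connectedComponentMk u = (coreGraph G M).connectedComponentMk w := by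
  rcases eq_or_ne u w with rfl | huw
  · rfl
  rw [(Sym2.mem_and_mem_iff huw).mp ⟨hu, hw⟩] at he
  exact ConnectedComponent.eq.mpr (Adj.reachable (G := coreGraph G M) he)

theorem ncard_component_coreVerts_eq_two_mul {c : ℕ}
    (hc : ∀ v, (∃ e ∈ coreEdges G M, v ∈ e) →
      {e ∈ coreEdges G M | v ∈ e ∧ coverCount G M e = c}.ncard = 1)
    (K : (coreGraph G M).ConnectedComponent) :
    {v | (coreGraph G M).connectedComponentMk v = K ∧ ∃ e ∈ coreEdges G M, v ∈ e}.ncard =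
      2 * {e ∈ coreEdges G M | (∀ v ∈ e, (coreGraph G M).connectedComponentMk v = K) ∧
        coverCount G M e = c}.ncard := by
  refine ncard_eq_two_mul_ncard_of_ncard_incident_eq_one
    (fun e he => G.not_isDiag_of_mem_edgeSet he.1.1)
    (fun e he v hv => ⟨he.2.1 v hv, e, he.1, hv⟩) (fun v ⟨hvK, hv⟩ => ?_)
  rw [← hc v hv]
  congr 1
  ext e
  simp only [Set.mem_ofPred_eq]
  constructor
  · rintro ⟨⟨he, -, hce⟩, hve⟩
    exact ⟨he, hve, hce⟩
  · rintro ⟨he, hve, hce⟩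
    refine ⟨⟨he, fun u hu => ?_, hce⟩, hve⟩
    exact connectedComponentMk_eq_of_mem_coreEdges he hu hve ▸ hvK

theorem ncard_component_coreEdges_eq_add (h3 : ∀ e ∈ G.edgeSet, coverCount G M e ≠ 3)
    (K : (coreGraph G M).ConnectedComponent) :
    {e ∈ coreEdges G M | ∀ v ∈ e, (coreGraph G M).connectedComponentMk v = K}.ncard =
      {e ∈ coreEdges G M | (∀ v ∈ e, (coreGraph G M).connectedComponentMk v = K) ∧
          coverCount G M e = 2}.ncard +
        {e ∈ coreEdges G M | (∀ v ∈ e, (coreGraph G M).connectedComponentMk v = K) ∧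
          coverCount G M e = 0}.ncard := by
  rw [← Set.ncard_union_eq]
  · congr 1
    ext e
    simp only [Set.mem_ofPred_eq, Set.mem_union, coreEdges]
    constructor
    · rintro ⟨⟨he, h1⟩, hK⟩
      have := h3 e he
      have := coverCount_le_three (M := M) e
      rcases (by omega : coverCount G M e = 2 ∨ coverCount G M e = 0) with hc | hc
      exacts [Or.inl ⟨⟨he, h1⟩, hK, hc⟩, Or.inr ⟨⟨he, h1⟩, hK, hc⟩]
    · rintro (⟨he, hK, -⟩ | ⟨he, hK, -⟩) <;> exact ⟨he, hK⟩
  · exact Set.disjoint_left.mpr fun _ h2 h0 => by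
      have := h2.2.2
      have := h0.2.2
      omega

end

theorem stmt_7 (G : SimpleGraph V) (hG : IsCubic G)
    (M : Fin 3 → G.Subgraph) (hM : ∀ i, (M i).IsPerfectMatching)
    (h3 : ∀ e ∈ G.edgeSet, coverCount G M e ≠ 3) :
    (∀ v : V, (∃ e ∈ coreEdges G M, v ∈ e) →
      {e ∈ coreEdges G M | v ∈ e ∧ coverCount G M e = 2}.ncard = 1 ∧
      {e ∈ coreEdges G M | v ∈ e ∧ coverCount G M e = 0}.ncard = 1) ∧
    (∀ K : (coreGraph G M).ConnectedComponent,
      (∃ e ∈ coreEdges G M, ∀ v ∈ e, (coreGraph G M).connectedComponentMk v = K) →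
      Even {e ∈ coreEdges G M |
        ∀ v ∈ e, (coreGraph G M).connectedComponentMk v = K}.ncard) := by
  have hvert := fun v (hv : ∃ e ∈ coreEdges G M, v ∈ e) =>
    ncard_incident_doubly_covered_eq_one_and_ncard_incident_uncovered_eq_one hG hM h3 hv
  refine ⟨hvert, fun K _ => ?_⟩
  have h2 := ncard_component_coreVerts_eq_two_mul (fun v hv => (hvert v hv).1) K
  have h0 := ncard_component_coreVerts_eq_two_mul (fun v hv => (hvert v hv).2) K
  rw [ncard_component_coreEdges_eq_add h3 K, Nat.even_iff]
  omega
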